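/- For every pair of integers n, k with ⌈(1+√(1+4(n−1)))/2⌉ ≤ k ≤ ⌈(n+1)/2⌉, there exists a set P of n points in ℝ² whose minimum identifying number by disks is exactly k. -/

import Mathlib

noncomputable section

/-- The Euclidean plane. -/
abbrev Pt : Type := EuclideanSpace ℝ (Fin 2)

instance : DecidableEq Pt := Classical.decEq _

/-- A disk: a closed Euclidean ball with nonnegative radius. -/
def IsDisk (D : Set Pt) : Prop :=
  ∃ (c : Pt) (r : ℝ), 0 ≤ r ∧ D = Metric.closedBall c r

/-- A family of disks identifies a finite point set: every point is covered and
every pair of distinct points is separated by some disk. -/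
def Identifies (𝒟 : Finset (Set Pt)) (P : Finset Pt) : Prop :=
  (∀ p ∈ P, ∃ D ∈ 𝒟, p ∈ D) ∧
  (∀ p ∈ P, ∀ q ∈ P, p ≠ q → ∃ D ∈ 𝒟, (p ∈ D ∧ q ∉ D) ∨ (q ∈ D ∧ p ∉ D))

/-- Minimum number of disks needed to identify `P`. -/
def gammaID (P : Finset Pt) : ℕ :=
  sInf {k | ∃ 𝒟 : Finset (Set Pt), 𝒟.card = k ∧ (∀ D ∈ 𝒟, IsDisk D) ∧ Identifies 𝒟 P}

/-!
A disk meets a line in an interval. Along `m` collinear points of `P`, add two virtual points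
outside every disk, one at each end: each of the `m + 1` gaps between consecutive points must be
crossed by the boundary of an identifying disk, and a disk crosses at most two of them. Hence
`m + 1 ≤ 2 |𝒟|`, and `2k - 2` collinear points already force `k` disks.

Conversely, take the `k` disks of radius `√2` centred at the `k`-th roots of unity. A point
`ρ e^{iα}` lies in the disk centred at `e^{iφ}` iff `(ρ - ρ⁻¹) / 2 ≤ cos (α - φ)`, so choosing
`α` and `ρ` the set of disks containing a point can be any cyclic interval of disks: this gives
`k (k - 1) + 1` pairwise distinguished points, `2k - 1` of which lie on one line through the
origin (at angle `π / (2k)`). Any `n ≤ k (k - 1) + 1` of them containing `min n (2k - 1)` of the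
collinear ones have identifying number exactly `k`.
-/

open Finset

theorem Set.OrdConnected.card_filter_xor_le_two {S : Set ℕ} [DecidablePred (· ∈ S)]
    (hS : S.OrdConnected) (N : ℕ) :
    #{j ∈ Finset.range N | Xor (j ∈ S) (j + 1 ∈ S)} ≤ 2 := by
  set C := {j ∈ Finset.range N | Xor (j ∈ S) (j + 1 ∈ S)}
  have entry : #{j ∈ C | j ∉ S} ≤ 1 := by
    refine card_le_one.2 fun j hj j' hj' => ?_
    simp only [C, mem_filter, xor_def] at hj hj'
    by_contra hne
    rcases lt_or_gt_of_ne hne with h | h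
    · exact hj'.2 (hS.out (hj.1.2.resolve_left (by tauto)).1
        (hj'.1.2.resolve_left (by tauto)).1 ⟨h, by omega⟩)
    · exact hj.2 (hS.out (hj'.1.2.resolve_left (by tauto)).1
        (hj.1.2.resolve_left (by tauto)).1 ⟨h, by omega⟩)
  have exit : #{j ∈ C | j ∈ S} ≤ 1 := by
    refine card_le_one.2 fun j hj j' hj' => ?_
    simp only [C, mem_filter, xor_def] at hj hj'
    by_contra hne
    rcases lt_or_gt_of_ne hne with h | h
    · exact (hj.1.2.resolve_right (by tauto)).2 (hS.out hj.2 hj'.2 ⟨by omega, h⟩)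
    · exact (hj'.1.2.resolve_right (by tauto)).2 (hS.out hj'.2 hj.2 ⟨by omega, h⟩)
  have := card_filter_add_card_filter_not (s := C) (· ∈ S)
  omega

theorem card_add_one_le_two_mul_card_of_ordConnected {α : Type*} [LinearOrder α] {T : Finset α}
    (hT : T.Nonempty) {𝒟 : Finset (Set α)} (h𝒟 : ∀ I ∈ 𝒟, I.OrdConnected)
    (hcov : ∀ t ∈ T, ∃ I ∈ 𝒟, t ∈ I)
    (hsep : ∀ s ∈ T, ∀ t ∈ T, s ≠ t → ∃ I ∈ 𝒟, Xor (s ∈ I) (t ∈ I)) :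
    #T + 1 ≤ 2 * #𝒟 := by
  classical
  set m := #T
  have hm : 0 < m := card_pos.2 hT
  let x : ℕ → α := fun j => T.orderEmbOfFin rfl ⟨min j (m - 1), by omega⟩
  have hxT (j : ℕ) : x j ∈ T := orderEmbOfFin_mem _ _ _
  have hxmono : Monotone x := fun j j' h =>
    (T.orderEmbOfFin rfl).monotone (Fin.mk_le_mk.2 (min_le_min_right _ h))
  have hxinj {j j' : ℕ} (hj : j < m) (hj' : j' < m) (h : x j = x j') : j = j' := by
    have := Fin.mk.inj_iff.1 ((T.orderEmbOfFin rfl).injective h)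
    omega
  -- Positions `1, …, m` carry the points of `T` in increasing order; positions `0` and `m + 1`
  -- lie in no `S I`, so each of the `m + 1` gaps between consecutive positions is crossed.
  let S : Set α → Set ℕ := fun I => {j | 1 ≤ j ∧ j ≤ m ∧ x (j - 1) ∈ I}
  have hS {I : Set α} (hI : I.OrdConnected) : (S I).OrdConnected :=
    ⟨fun a ha b hb j hj => ⟨by grind, by grind,
      hI.out ha.2.2 hb.2.2 ⟨hxmono (by grind), hxmono (by grind)⟩⟩⟩
  have hcover :
      range (m + 1) ⊆ 𝒟.biUnion fun I => {j ∈ range (m + 1) | Xor (j ∈ S I) (j + 1 ∈ S I)} := by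
    intro j hj
    have hj : j < m + 1 := mem_range.1 hj
    obtain ⟨I, hI, hxor⟩ : ∃ I ∈ 𝒟, Xor (j ∈ S I) (j + 1 ∈ S I) := by
      rcases Nat.eq_zero_or_pos j with rfl | hj₀
      · obtain ⟨I, hI, h⟩ := hcov _ (hxT 0)
        exact ⟨I, hI, Or.inr ⟨⟨le_rfl, by omega, h⟩, by simp [S]⟩⟩
      rcases (Nat.lt_succ_iff.1 hj).eq_or_lt with rfl | hjm
      · obtain ⟨I, hI, h⟩ := hcov _ (hxT (m - 1))
        exact ⟨I, hI, Or.inl ⟨⟨hj₀, le_rfl, h⟩, by simp [S]⟩⟩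
      · obtain ⟨I, hI, h⟩ := hsep _ (hxT (j - 1)) _ (hxT j)
          (fun h => by have := hxinj (by omega) hjm h; omega)
        refine ⟨I, hI, ?_⟩
        simpa [S, show 1 ≤ j from hj₀, hjm.le, Nat.succ_le_of_lt hjm] using h
    exact mem_biUnion.2 ⟨I, hI, mem_filter.2 ⟨mem_range.2 hj, hxor⟩⟩
  calc #T + 1 = #(range (m + 1)) := (card_range _).symm
    _ ≤ ∑ I ∈ 𝒟, #{j ∈ range (m + 1) | Xor (j ∈ S I) (j + 1 ∈ S I)} :=
      (card_le_card hcover).trans card_biUnion_le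
    _ ≤ ∑ I ∈ 𝒟, 2 := sum_le_sum fun I hI => (hS (h𝒟 I hI)).card_filter_xor_le_two (m + 1)
    _ = 2 * #𝒟 := by rw [sum_const, smul_eq_mul, mul_comm]

theorem Identifies.mono {𝒟 : Finset (Set Pt)} {P S : Finset Pt} (h : Identifies 𝒟 P)
    (hS : S ⊆ P) : Identifies 𝒟 S :=
  ⟨fun p hp => h.1 p (hS hp), fun p hp q hq => h.2 p (hS hp) q (hS hq)⟩

theorem Identifies.card_add_one_le_two_mul_card_of_collinear {𝒟 : Finset (Set Pt)}
    {S : Finset Pt} (h : Identifies 𝒟 S) (h𝒟 : ∀ D ∈ 𝒟, Convex ℝ D) (hS : S.Nonempty)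
    (hcol : Collinear ℝ (S : Set Pt)) : #S + 1 ≤ 2 * #𝒟 := by
  classical
  obtain ⟨p₀, v, hv⟩ := (collinear_iff_exists_forall_eq_smul_vadd _).1 hcol
  obtain ⟨p, hp⟩ := hS
  obtain ⟨D, hD, -⟩ := h.1 p hp
  by_cases hv₀ : v = 0
  · have : #S ≤ 1 := card_le_one.2 fun a ha b hb => by
      obtain ⟨r, rfl⟩ := hv a ha
      obtain ⟨r', rfl⟩ := hv b hb
      simp [hv₀]
    have := card_pos.2 ⟨D, hD⟩
    omega
  let f : ℝ →ᵃ[ℝ] Pt := AffineMap.lineMap p₀ (v +ᵥ p₀)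
  have hf : Function.Injective f := by
    intro r r' h
    simpa [f, AffineMap.lineMap_apply, hv₀] using h
  have hT : #(S.preimage f hf.injOn) = #S := by
    rw [card_preimage, filter_true_of_mem]
    intro q hq
    obtain ⟨r, rfl⟩ := hv q hq
    exact ⟨r, by simp [f, AffineMap.lineMap_apply]⟩
  have key := card_add_one_le_two_mul_card_of_ordConnected (T := S.preimage f hf.injOn)
    (𝒟 := 𝒟.image (f ⁻¹' ·)) (card_pos.1 (hT ▸ card_pos.2 ⟨p, hp⟩))
    (by simpa using fun D hD => ((h𝒟 D hD).affine_preimage f).ordConnected)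
    (fun t ht => by
      obtain ⟨D, hD, htD⟩ := h.1 _ (mem_preimage.1 ht)
      exact ⟨_, mem_image_of_mem _ hD, htD⟩)
    (fun s hs t ht hst => by
      obtain ⟨D, hD, hxor⟩ := h.2 _ (mem_preimage.1 hs) _ (mem_preimage.1 ht) (hf.ne hst)
      exact ⟨_, mem_image_of_mem _ hD, hxor⟩)
  rw [hT] at key
  exact key.trans (Nat.mul_le_mul_left 2 card_image_le)

theorem identifies_iff {𝒟 : Finset (Set Pt)} {P : Finset Pt} :
    Identifies 𝒟 P ↔ (∀ p ∈ P, ∃ D ∈ 𝒟, p ∈ D) ∧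
      ∀ p ∈ P, ∀ q ∈ P, (∀ D ∈ 𝒟, p ∈ D ↔ q ∈ D) → p = q := by
  refine and_congr_right fun _ => forall₂_congr fun p _ => forall₂_congr fun q _ => ?_
  rw [Ne, not_imp_comm]
  refine imp_congr_left ?_
  simp only [not_exists, not_and]
  exact forall₂_congr fun D _ => by tauto

theorem IsDisk.convex {D : Set Pt} (h : IsDisk D) : Convex ℝ D := by
  obtain ⟨c, r, -, rfl⟩ := h
  exact convex_closedBall c r

theorem gammaID_eq {P : Finset Pt} {k : ℕ}
    (hup : ∃ 𝒟 : Finset (Set Pt), #𝒟 ≤ k ∧ (∀ D ∈ 𝒟, IsDisk D) ∧ Identifies 𝒟 P)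
    (hlow : ∀ 𝒟 : Finset (Set Pt), (∀ D ∈ 𝒟, IsDisk D) → Identifies 𝒟 P → k ≤ #𝒟) :
    gammaID P = k := by
  obtain ⟨𝒟, h𝒟, hdisk, hid⟩ := hup
  have hmem : #𝒟 ∈ {k | ∃ 𝒟 : Finset (Set Pt), #𝒟 = k ∧ (∀ D ∈ 𝒟, IsDisk D) ∧ Identifies 𝒟 P} :=
    ⟨𝒟, rfl, hdisk, hid⟩
  refine le_antisymm ((Nat.sInf_le hmem).trans h𝒟) ?_
  obtain ⟨𝒟', h', hdisk', hid'⟩ := Nat.sInf_mem ⟨_, hmem⟩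
  rw [gammaID, ← h']
  exact hlow 𝒟' hdisk' hid'

namespace RootsOfUnityDisks

open Real Metric

-- The positive root `ρ` of `ρ ^ 2 - 2 c ρ - 1 = 0`, i.e. `(ρ - ρ⁻¹) / 2 = c`.
def rad (c : ℝ) : ℝ := c + √(c ^ 2 + 1)

lemma rad_pos (c : ℝ) : 0 < rad c := by
  have h := sq_sqrt (show 0 ≤ c ^ 2 + 1 by positivity)
  have : |c| < √(c ^ 2 + 1) := by
    rw [← sqrt_sq_eq_abs]; exact sqrt_lt_sqrt (sq_nonneg c) (by linarith)
  unfold rad; linarith [neg_abs_le c]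

lemma rad_sq (c : ℝ) : rad c ^ 2 = 2 * c * rad c + 1 := by
  have h := sq_sqrt (show 0 ≤ c ^ 2 + 1 by positivity)
  unfold rad; linear_combination h

def unitVec (θ : ℝ) : Pt := !₂[cos θ, sin θ]

lemma dist_smul_unitVec_sq (ρ θ φ : ℝ) :
    dist (ρ • unitVec θ) (unitVec φ) ^ 2 = ρ ^ 2 + 1 - 2 * ρ * cos (θ - φ) := by
  rw [EuclideanSpace.dist_eq, sq_sqrt (by positivity), Fin.sum_univ_two]
  simp [unitVec, Real.dist_eq, sq_abs, cos_sub]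
  linear_combination (ρ ^ 2) * sin_sq_add_cos_sq θ + sin_sq_add_cos_sq φ

lemma rad_smul_unitVec_mem_closedBall_iff (c θ φ : ℝ) :
    rad c • unitVec θ ∈ closedBall (unitVec φ) √2 ↔ c ≤ cos (θ - φ) := by
  have hρ := rad_pos c
  rw [mem_closedBall, ← sq_le_sq₀ dist_nonneg (sqrt_nonneg 2), sq_sqrt zero_le_two,
    dist_smul_unitVec_sq, rad_sq]
  constructor
  · intro h; nlinarith
  · intro h; nlinarith

lemma unitVec_add_pi (θ : ℝ) : unitVec (θ + π) = -unitVec θ := by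
  ext i; fin_cases i <;> simp [unitVec]

lemma unitVec_add_two_pi (θ : ℝ) : unitVec (θ + 2 * π) = unitVec θ := by
  ext i; fin_cases i <;> simp [unitVec]

lemma cos_le_cos_iff_exists_int {β x : ℝ} (hβ₀ : 0 ≤ β) (hβ : β ≤ π) :
    cos β ≤ cos x ↔ ∃ z : ℤ, |x - 2 * π * z| ≤ β := by
  have key : ∀ y, |y| ≤ π → (cos β ≤ cos y ↔ |y| ≤ β) := fun y hy => by
    rw [← cos_abs y]
    exact strictAntiOn_cos.le_iff_ge ⟨hβ₀, hβ⟩ ⟨abs_nonneg y, hy⟩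
  have hcos : ∀ z : ℤ, cos (x - 2 * π * z) = cos x := fun z => by
    rw [mul_comm, cos_sub_int_mul_two_pi]
  constructor
  · intro h
    set y := toIocMod two_pi_pos (-π) x
    obtain ⟨hy₁, hy₂⟩ := toIocMod_mem_Ioc two_pi_pos (-π) x
    have hxy := self_sub_toIocMod_eq_mul two_pi_pos (-π) x
    refine ⟨toIocDiv two_pi_pos (-π) x, ?_⟩
    have hy : x - 2 * π * toIocDiv two_pi_pos (-π) x = y := by linarith
    rw [hy, ← key y (abs_le.2 ⟨hy₁.le, by linarith⟩)]
    rwa [← hy, hcos]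
  · rintro ⟨z, hz⟩
    rw [← hcos z, key _ (hz.trans hβ)]
    exact hz

def disk (k i : ℕ) : Set Pt := closedBall (unitVec (2 * π * i / k)) √2

-- The point at angle `π a / (2k)` whose modulus makes it lie in exactly those disks whose centre
-- is within angle `π b / (2k)` of it (`0 ≤ b ≤ 2k`).
def arcPoint (k : ℕ) (a b : ℤ) : Pt := rad (cos (π * b / (2 * k))) • unitVec (π * a / (2 * k))

lemma arcPoint_mem_disk_iff {k : ℕ} (hk : 0 < k) {a b : ℤ} (hb₀ : 0 ≤ b) (hb : b ≤ 2 * k) (i : ℕ) :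
    arcPoint k a b ∈ disk k i ↔ ∃ z : ℤ, |a - 4 * (i + k * z)| ≤ b := by
  have hc : (0 : ℝ) < π / (2 * k) := by positivity
  have hb' : π * b / (2 * k) ≤ π := by
    rw [div_le_iff₀ (by positivity)]
    nlinarith [pi_pos, show (b : ℝ) ≤ 2 * k by exact_mod_cast hb]
  rw [arcPoint, disk, rad_smul_unitVec_mem_closedBall_iff,
    cos_le_cos_iff_exists_int (by positivity) hb']
  refine exists_congr fun z => ?_
  have e : π * a / (2 * k) - 2 * π * i / k - 2 * π * z = π / (2 * k) * (a - 4 * (i + k * z)) := by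
    field_simp; ring
  rw [e, abs_mul, abs_of_pos hc, show π * b / (2 * k) = π / (2 * k) * b by ring,
    mul_le_mul_iff_right₀ hc]
  exact_mod_cast Iff.rfl

-- `{s, s + 1, …, s + L - 1}` modulo `k`.
def cyclicInterval (k : ℕ) (s L : ℤ) : Set ℤ := {i | ∃ z : ℤ, s ≤ i + k * z ∧ i + k * z < s + L}

lemma arcPoint_mem_disk_iff_mem_cyclicInterval {k : ℕ} (hk : 0 < k) {a b s L : ℤ} (hb₀ : 0 ≤ b)
    (hb : b ≤ 2 * k) (hab : ∀ w : ℤ, |a - 4 * w| ≤ b ↔ s ≤ w ∧ w < s + L) (i : ℕ) :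
    arcPoint k a b ∈ disk k i ↔ (i : ℤ) ∈ cyclicInterval k s L := by
  rw [arcPoint_mem_disk_iff hk hb₀ hb]
  exact exists_congr fun z => hab _

lemma mem_cyclicInterval_of_le {k : ℕ} {s L i : ℤ} (h₁ : s ≤ i) (h₂ : i < s + L) :
    i ∈ cyclicInterval k s L :=
  ⟨0, by simpa using h₁, by simpa using h₂⟩

lemma add_mul_mem_cyclicInterval_iff {k : ℕ} {s L i : ℤ} (t : ℤ) :
    i + k * t ∈ cyclicInterval k s L ↔ i ∈ cyclicInterval k s L := by
  constructor
  · rintro ⟨z, hz⟩; exact ⟨t + z, by linarith, by linarith⟩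
  · rintro ⟨z, hz⟩; exact ⟨z - t, by linarith, by linarith⟩

lemma cyclicInterval_add_mul (k : ℕ) (s L t : ℤ) :
    cyclicInterval k (s + k * t) L = cyclicInterval k s L := by
  ext i
  constructor
  · rintro ⟨z, hz⟩; exact ⟨z - t, by linarith, by linarith⟩
  · rintro ⟨z, hz⟩; exact ⟨z + t, by linarith, by linarith⟩

lemma exists_add_mul_le_of_mem_cyclicInterval {k : ℕ} {s L i : ℤ} (h : i ∈ cyclicInterval k s L) :
    ∃ t : ℤ, s + k * t ≤ i ∧ i < s + k * t + L := by
  obtain ⟨z, hz⟩ := h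
  exact ⟨-z, by linarith, by linarith⟩

lemma notMem_cyclicInterval {k : ℕ} {s L i : ℤ} (h₁ : s + L ≤ i) (h₂ : i < s + k) :
    i ∉ cyclicInterval k s L := by
  rintro ⟨z, hz₁, hz₂⟩
  have : (k : ℤ) * z = 0 :=
    Int.eq_zero_of_abs_lt_dvd ⟨z, rfl⟩ (abs_lt.2 ⟨by linarith, by linarith⟩)
  omega

lemma emod_mem_cyclicInterval_iff {k : ℕ} {s L i : ℤ} :
    i % k ∈ cyclicInterval k s L ↔ i ∈ cyclicInterval k s L := by
  rw [← add_mul_mem_cyclicInterval_iff (i / k), Int.emod_add_mul_ediv]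

lemma cyclicInterval_eq_of_forall_lt {k : ℕ} (hk : 0 < k) {s L s' L' : ℤ}
    (h : ∀ i < k, ((i : ℤ) ∈ cyclicInterval k s L ↔ (i : ℤ) ∈ cyclicInterval k s' L')) :
    cyclicInterval k s L = cyclicInterval k s' L' := by
  ext i
  have h₀ := Int.emod_nonneg i (show (k : ℤ) ≠ 0 by omega)
  have h₁ := Int.emod_lt_of_pos i (show (0 : ℤ) < k by omega)
  have := h (i % k).toNat (by omega)
  rwa [Int.toNat_of_nonneg h₀, emod_mem_cyclicInterval_iff, emod_mem_cyclicInterval_iff] at this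

lemma cyclicInterval_ne_of_lt {k : ℕ} {s L s' L' : ℤ} (hL : 0 < L) (hLL' : L < L') (hL' : L' ≤ k) :
    cyclicInterval k s L ≠ cyclicInterval k s' L' := by
  intro h
  obtain ⟨t, ht⟩ := exists_add_mul_le_of_mem_cyclicInterval
    (h ▸ mem_cyclicInterval_of_le le_rfl (by linarith) : s' ∈ cyclicInterval k s L)
  rw [← cyclicInterval_add_mul k s L t] at h
  have hmem : s + k * t + L ∈ cyclicInterval k s' L' :=
    mem_cyclicInterval_of_le (by linarith) (by linarith)
  exact notMem_cyclicInterval le_rfl (by linarith) (h ▸ hmem)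

lemma eq_and_modEq_of_cyclicInterval_eq {k : ℕ} {s L s' L' : ℤ} (hL : 0 < L) (hL' : 0 < L')
    (hLk : L ≤ k) (hLk' : L' ≤ k) (h : cyclicInterval k s L = cyclicInterval k s' L') :
    L = L' ∧ (L < k → s ≡ s' [ZMOD k]) := by
  obtain rfl : L = L' := by
    by_contra hne
    rcases lt_or_gt_of_ne hne with hlt | hlt
    · exact cyclicInterval_ne_of_lt hL hlt hLk' h
    · exact cyclicInterval_ne_of_lt hL' hlt hLk h.symm
  refine ⟨rfl, fun hLk => ?_⟩
  obtain ⟨t, ht⟩ := exists_add_mul_le_of_mem_cyclicInterval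
    (h ▸ mem_cyclicInterval_of_le le_rfl (by linarith) : s ∈ cyclicInterval k s' L)
  rw [← cyclicInterval_add_mul k s' L t] at h
  obtain heq | hlt := ht.1.eq_or_lt
  · exact Int.modEq_iff_dvd.2 ⟨-t, by linarith⟩
  · have hmem : s - 1 + k * 1 ∈ cyclicInterval k s L := by
      rw [add_mul_mem_cyclicInterval_iff, h]
      exact mem_cyclicInterval_of_le (by linarith) (by linarith)
    exact absurd hmem (notMem_cyclicInterval (by linarith) (by linarith))

-- The label `(s, L)` stands for the cyclic interval of `L` disks starting at disk `s`. These two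
-- families are the labels of `arcPoint k (2k + 1) (2L)` and `arcPoint k (4k + 1) (2L)`, which lie
-- on the two rays of the line `ℝ • unitVec (π / (2k))`.
def negRayLabel (k L : ℕ) : ℕ × ℕ := ((k - L) / 2 + 1, L)

def posRayLabel (k L : ℕ) : ℕ × ℕ := (k - (L - 1) / 2, L)

def labelPoint (k : ℕ) (q : ℕ × ℕ) : Pt :=
  if q.1 = (k - q.2) / 2 + 1 then arcPoint k (2 * k + 1) (2 * q.2)
  else if q.1 = k - (q.2 - 1) / 2 then arcPoint k (4 * k + 1) (2 * q.2)
  else arcPoint k (4 * q.1 + 2 * q.2 - 2) (2 * q.2 - 1)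

lemma labelPoint_mem_disk_iff {k : ℕ} (hk : 0 < k) {q : ℕ × ℕ} (hL₀ : 1 ≤ q.2) (hL : q.2 ≤ k)
    (i : ℕ) : labelPoint k q ∈ disk k i ↔ (i : ℤ) ∈ cyclicInterval k q.1 q.2 := by
  unfold labelPoint
  split_ifs with h₁ h₂ <;>
  · refine arcPoint_mem_disk_iff_mem_cyclicInterval hk (by omega) (by omega) (fun w => ?_) i
    rw [abs_le]
    omega

-- Starts range over `[1, k]` rather than `[0, k)` so that the labels of the points on the line
-- need no reduction modulo `k`.
def labels (k : ℕ) : Finset (ℕ × ℕ) := Icc 1 k ×ˢ Icc 1 (k - 1) ∪ {(1, k)}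

lemma mem_labels {k : ℕ} (hk : 0 < k) {q : ℕ × ℕ} :
    q ∈ labels k ↔ 1 ≤ q.1 ∧ q.1 ≤ k ∧ 1 ≤ q.2 ∧ q.2 ≤ k ∧ (q.2 < k ∨ q.1 = 1) := by
  simp only [labels, mem_union, mem_product, mem_Icc, mem_singleton, Prod.ext_iff]
  omega

lemma card_labels {k : ℕ} (hk : 0 < k) : #(labels k) = k * (k - 1) + 1 := by
  rw [labels, card_union_of_disjoint (by simp; omega), card_product, Nat.card_Icc, Nat.card_Icc,
    card_singleton, Nat.add_sub_cancel, show k - 1 + 1 - 1 = k - 1 by omega]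

lemma eq_of_cyclicInterval_eq {k : ℕ} (hk : 0 < k) {q q' : ℕ × ℕ} (hq : q ∈ labels k)
    (hq' : q' ∈ labels k) (h : cyclicInterval k q.1 q.2 = cyclicInterval k q'.1 q'.2) : q = q' := by
  rw [mem_labels hk] at hq hq'
  obtain ⟨hL, hs⟩ := eq_and_modEq_of_cyclicInterval_eq (by omega) (by omega) (by omega) (by omega) h
  have hL : q.2 = q'.2 := by exact_mod_cast hL
  refine Prod.ext ?_ hL
  rcases (show q.2 ≤ k by omega).eq_or_lt with hLk | hLk
  · omega
  obtain ⟨t, ht⟩ := Int.modEq_iff_dvd.1 (hs (by exact_mod_cast hLk))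
  have : (q'.1 : ℤ) - q.1 = 0 :=
    Int.eq_zero_of_abs_lt_dvd ⟨t, ht⟩ (abs_lt.2 ⟨by omega, by omega⟩)
  omega

lemma eq_of_forall_labelPoint_mem_disk_iff {k : ℕ} (hk : 0 < k) {q q' : ℕ × ℕ}
    (hq : q ∈ labels k) (hq' : q' ∈ labels k)
    (h : ∀ i < k, labelPoint k q ∈ disk k i ↔ labelPoint k q' ∈ disk k i) : q = q' := by
  refine eq_of_cyclicInterval_eq hk hq hq' (cyclicInterval_eq_of_forall_lt hk fun i hi => ?_)
  rw [mem_labels hk] at hq hq'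
  rw [← labelPoint_mem_disk_iff hk (by omega) (by omega),
    ← labelPoint_mem_disk_iff hk (by omega) (by omega)]
  exact h i hi

lemma injOn_labelPoint {k : ℕ} (hk : 0 < k) : Set.InjOn (labelPoint k) (labels k) :=
  fun _ hq _ hq' h => eq_of_forall_labelPoint_mem_disk_iff hk hq hq' (by simp [h])

lemma exists_mem_disk_labelPoint {k : ℕ} (hk : 0 < k) {q : ℕ × ℕ} (hq : q ∈ labels k) :
    ∃ i < k, labelPoint k q ∈ disk k i := by
  rw [mem_labels hk] at hq
  refine ⟨q.1 % k, Nat.mod_lt _ hk, ?_⟩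
  rw [labelPoint_mem_disk_iff hk (by omega) (by omega), Int.natCast_mod,
    emod_mem_cyclicInterval_iff]
  exact mem_cyclicInterval_of_le le_rfl (by omega)

def lineLabels (k : ℕ) : Finset (ℕ × ℕ) :=
  (Icc 1 k).image (negRayLabel k) ∪ (Icc 1 (k - 1)).image (posRayLabel k)

lemma lineLabels_subset_labels {k : ℕ} (hk : 0 < k) : lineLabels k ⊆ labels k := by
  intro q hq
  simp only [lineLabels, mem_union, mem_image, mem_Icc] at hq
  rw [mem_labels hk]
  rcases hq with ⟨L, hL, rfl⟩ | ⟨L, hL, rfl⟩ <;> simp only [negRayLabel, posRayLabel] <;> omega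

lemma card_lineLabels {k : ℕ} (hk : 0 < k) : #(lineLabels k) = 2 * k - 1 := by
  rw [lineLabels, card_union_of_disjoint,
    card_image_of_injOn fun _ _ _ _ h => congrArg Prod.snd h,
    card_image_of_injOn fun _ _ _ _ h => congrArg Prod.snd h,
    Nat.card_Icc, Nat.card_Icc]
  · omega
  · simp only [disjoint_left, mem_image, mem_Icc, negRayLabel, posRayLabel]
    rintro _ ⟨L, hL, rfl⟩ ⟨L', hL', h⟩
    simp only [Prod.mk.injEq] at h
    omega

lemma labelPoint_mem_line {k : ℕ} (hk : 0 < k) {q : ℕ × ℕ} (hq : q ∈ lineLabels k) :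
    ∃ r : ℝ, labelPoint k q = r • unitVec (π / (2 * k)) := by
  have hk' : (k : ℝ) ≠ 0 := by positivity
  simp only [lineLabels, mem_union, mem_image, mem_Icc] at hq
  rcases hq with ⟨L, hL, rfl⟩ | ⟨L, hL, rfl⟩
  · refine ⟨-rad (cos (π * (2 * L : ℤ) / (2 * k))), ?_⟩
    rw [labelPoint, negRayLabel, if_pos rfl, arcPoint, neg_smul, ← smul_neg, ← unitVec_add_pi]
    congr 2
    push_cast
    field_simp
    ring
  · refine ⟨rad (cos (π * (2 * L : ℤ) / (2 * k))), ?_⟩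
    rw [labelPoint, posRayLabel, if_neg (by omega), if_pos rfl, arcPoint,
      ← unitVec_add_two_pi (π / (2 * k))]
    congr 2
    push_cast
    field_simp
    ring

lemma isDisk_disk (k i : ℕ) : IsDisk (disk k i) := ⟨_, _, sqrt_nonneg 2, rfl⟩

theorem exists_identified_with_collinear_subset {k n m : ℕ} (hk : 0 < k)
    (hn : n ≤ k * (k - 1) + 1) (hmn : m ≤ n) (hm : m ≤ 2 * k - 1) :
    ∃ (P S : Finset Pt) (𝒟 : Finset (Set Pt)), #P = n ∧ #𝒟 ≤ k ∧ (∀ D ∈ 𝒟, IsDisk D) ∧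
      Identifies 𝒟 P ∧ S ⊆ P ∧ #S = m ∧ Collinear ℝ (S : Set Pt) := by
  classical
  obtain ⟨R, hR, hRcard⟩ :=
    exists_subset_card_eq (s := lineLabels k) (n := m) (by rwa [card_lineLabels hk])
  have hRlabels := hR.trans (lineLabels_subset_labels hk)
  obtain ⟨C, hRC, hC, hCcard⟩ :=
    exists_subsuperset_card_eq (n := n) hRlabels (hRcard ▸ hmn) (by rwa [card_labels hk])
  have hinj := injOn_labelPoint hk
  refine ⟨C.image (labelPoint k), R.image (labelPoint k), (range k).image (disk k), ?_,
    card_image_le.trans (card_range k).le, ?_, ?_, image_subset_image hRC, ?_, ?_⟩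
  · rw [card_image_of_injOn (hinj.mono hC), hCcard]
  · simp [isDisk_disk]
  · simp only [identifies_iff, forall_mem_image, exists_mem_image, mem_range]
    refine ⟨fun q hq => exists_mem_disk_labelPoint hk (hC hq), fun q hq q' hq' h => ?_⟩
    rw [eq_of_forall_labelPoint_mem_disk_iff hk (hC hq) (hC hq') h]
  · rw [card_image_of_injOn (hinj.mono hRlabels), hRcard]
  · rw [collinear_iff_exists_forall_eq_smul_vadd]
    refine ⟨0, unitVec (π / (2 * k)), ?_⟩
    simp only [coe_image, Set.forall_mem_image]
    intro q hq
    obtain ⟨r, hr⟩ := labelPoint_mem_line hk (hR hq)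
    exact ⟨r, by rw [hr, vadd_eq_add, add_zero]⟩

end RootsOfUnityDisks

theorem pos_and_le_of_ceil_le {n k : ℕ}
    (h : ⌈(1 + Real.sqrt (1 + 4 * ((n : ℝ) - 1))) / 2⌉ ≤ (k : ℤ)) :
    0 < k ∧ n ≤ k * (k - 1) + 1 := by
  have hx := Int.ceil_le.1 h
  push_cast at hx
  have hs := Real.sqrt_nonneg (1 + 4 * ((n : ℝ) - 1))
  have hk : 0 < k := by exact_mod_cast (show (0 : ℝ) < k by linarith)
  refine ⟨hk, ?_⟩
  have hsq := (Real.sqrt_le_iff.1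
    (show Real.sqrt (1 + 4 * ((n : ℝ) - 1)) ≤ 2 * k - 1 by linarith)).2
  have : (n : ℝ) ≤ ((k * (k - 1) + 1 : ℕ) : ℝ) := by
    rw [Nat.cast_add, Nat.cast_mul, Nat.cast_sub hk, Nat.cast_one]
    nlinarith
  exact_mod_cast this

/-- Every value `k` between the lower bound `⌈(1+√(1+4(n-1)))/2⌉` and the upper bound
`⌈(n+1)/2⌉` is attained as the minimum identifying number of some `n`-point set. -/
theorem all_values_attained (n k : ℕ) (hn : 1 ≤ n)
    (h1 : ⌈(1 + Real.sqrt (1 + 4 * ((n : ℝ) - 1))) / 2⌉ ≤ (k : ℤ))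
    (h2 : k ≤ (n + 2) / 2) :
    ∃ P : Finset Pt, P.card = n ∧ gammaID P = k := by
  obtain ⟨hk, hnk⟩ := pos_and_le_of_ceil_le h1
  obtain ⟨P, S, 𝒟, hP, h𝒟, hdisk, hid, hSP, hS, hcol⟩ :=
    RootsOfUnityDisks.exists_identified_with_collinear_subset hk hnk
      (min_le_left n (2 * k - 1)) (min_le_right n (2 * k - 1))
  refine ⟨P, hP, gammaID_eq ⟨𝒟, h𝒟, hdisk, hid⟩ fun 𝒟' hdisk' hid' => ?_⟩
  have := (hid'.mono hSP).card_add_one_le_two_mul_card_of_collinear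
    (fun D hD => (hdisk' D hD).convex) (card_pos.1 (by omega)) hcol
  omega
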